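/- Let ξ_n > 0, η_n > 0 and α_n > 0 be sequences and let k_n be integers with 1 ≤ k_n < n such that n^{1/2} η_n (n − k_n)^{−1/2} → 0 as n → ∞. For each n, θ ∈ ℝ and σ > 0, let Z have law N(θ, σ²ξ_n²/n) and let S be independent of Z with density ρ_{n−k_n}; let μ_{n,θ,σ} denote the law of σ^{−1} α_n (Z·1(|Z| > σξ_nη_n) − θ) (infeasible hard-thresholding) and μ̃_{n,θ,σ} the law of σ^{−1} α_n (Z·1(|Z| > σSξ_nη_n) − θ) (feasible hard-thresholding). Then the total variation distance between μ_{n,θ,σ} and μ̃_{n,θ,σ}, i.e. sup over Borel sets A ⊆ ℝ of |μ_{n,θ,σ}(A) − μ̃_{n,θ,σ}(A)|, tends to 0 as n → ∞ uniformly in θ ∈ ℝ and σ ∈ (0,∞). -/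

import Mathlib

open MeasureTheory ProbabilityTheory Filter Set

/-- Standard normal cdf. -/
noncomputable def Phi (x : ℝ) : ℝ :=
  ∫ t in Iic x, (Real.sqrt (2 * Real.pi))⁻¹ * Real.exp (-t ^ 2 / 2)

/-- Standard normal pdf. -/
noncomputable def stdPhi (t : ℝ) : ℝ :=
  (Real.sqrt (2 * Real.pi))⁻¹ * Real.exp (-t ^ 2 / 2)

/-- Extension of `Phi` to the extended reals, with `PhiE ⊤ = 1` and `PhiE ⊥ = 0`. -/
noncomputable def PhiE (z : EReal) : ℝ :=
  if z = ⊤ then 1 else if z = ⊥ then 0 else Phi z.toReal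

/-- Density of `m^{-1/2}` times the square root of a chi-square with `m` degrees of freedom. -/
noncomputable def rho (m : ℕ) (s : ℝ) : ℝ :=
  if 0 < s then
    (2 : ℝ) ^ ((1 : ℝ) - (m : ℝ) / 2) * (Real.Gamma ((m : ℝ) / 2))⁻¹ * Real.sqrt m *
      ((m : ℝ) * s ^ 2) ^ (((m : ℝ) - 1) / 2) * Real.exp (-(m : ℝ) * s ^ 2 / 2)
  else 0

/-- Joint law of the least-squares coordinate `Z ~ N(θ, σ²ξ²/n)` and the independent
variance-estimator ratio `S` with density `rho m`. -/
noncomputable def jointMeas (n m : ℕ) (ξ θ σ : ℝ) : Measure (ℝ × ℝ) :=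
  (gaussianReal θ (Real.toNNReal (σ ^ 2 * ξ ^ 2 / n))).prod
    (volume.withDensity fun s => ENNReal.ofReal (rho m s))

/-- Feasible hard-thresholding estimator `Z · 1(|Z| > σSξη)`. -/
noncomputable def hardF (σ ξ η : ℝ) (p : ℝ × ℝ) : ℝ :=
  if σ * p.2 * ξ * η < |p.1| then p.1 else 0

/-- Feasible soft-thresholding estimator `sign(Z)(|Z| − σSξη)₊`. -/
noncomputable def softF (σ ξ η : ℝ) (p : ℝ × ℝ) : ℝ :=
  Real.sign p.1 * max (|p.1| - σ * p.2 * ξ * η) 0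

/-- Feasible adaptive soft-thresholding estimator `Z(1 − σ²S²ξ²η²/Z²)₊`. -/
noncomputable def adaptF (σ ξ η : ℝ) (p : ℝ × ℝ) : ℝ :=
  if p.1 = 0 then 0 else p.1 * max (1 - (σ * p.2 * ξ * η) ^ 2 / p.1 ^ 2) 0

/-!
The two estimators can only differ when `|Z|` lies between the thresholds `σξη` and `σSξη`.
Given `S = s`, the `N(θ, σ²ξ²/n)` density is at most `√n / (√(2π) σξ)`, so this event has
probability at most `√n / (√(2π) σξ) · 2σξ|η| |s - 1|`. Since `S²` is `χ²_m / m`, which has mean `1`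
and variance `2/m`, we get `E|S - 1| ≤ E|S² - 1| ≤ √(2/m)`. So the total variation distance is at
most `(2/√π) √n |η| / √(n - k)`, whatever `θ` and `σ` are.
-/

open scoped NNReal ENNReal

section Rho

variable {m : ℕ}

lemma rho_nonneg (m : ℕ) (s : ℝ) : 0 ≤ rho m s := by
  unfold rho
  split_ifs
  · have : 0 ≤ Real.Gamma ((m : ℝ) / 2) := Real.Gamma_nonneg_of_nonneg (by positivity)
    positivity
  · exact le_rfl

lemma rho_of_nonpos {s : ℝ} (hs : s ≤ 0) : rho m s = 0 := by
  simp [rho, not_lt.2 hs]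

lemma measurable_rho (m : ℕ) : Measurable (rho m) :=
  Measurable.ite measurableSet_Ioi (by fun_prop) measurable_const

lemma rpow_mul_rho_eqOn (hm : 0 < m) (q : ℝ) :
    EqOn (fun s : ℝ => s ^ q * rho m s)
      (fun s : ℝ => (2 : ℝ) ^ ((1 : ℝ) - m / 2) * (Real.Gamma (m / 2))⁻¹ *
        (m : ℝ) ^ ((m : ℝ) / 2) * (s ^ ((m : ℝ) - 1 + q) * Real.exp (-(m / 2) * s ^ 2)))
      (Ioi 0) := by
  intro s (hs : 0 < s)
  have hm' : (0 : ℝ) < m := by exact_mod_cast hm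
  have hpow : ((m : ℝ) * s ^ 2) ^ (((m : ℝ) - 1) / 2) =
      (m : ℝ) ^ (((m : ℝ) - 1) / 2) * s ^ ((m : ℝ) - 1) := by
    rw [Real.mul_rpow hm'.le (sq_nonneg s), ← Real.rpow_natCast s 2, ← Real.rpow_mul hs.le]
    norm_num [mul_div_cancel₀]
  have hsqrt : Real.sqrt m * (m : ℝ) ^ (((m : ℝ) - 1) / 2) = (m : ℝ) ^ ((m : ℝ) / 2) := by
    rw [Real.sqrt_eq_rpow, ← Real.rpow_add hm']; ring_nf
  have hs_pow : s ^ q * s ^ ((m : ℝ) - 1) = s ^ ((m : ℝ) - 1 + q) := by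
    rw [← Real.rpow_add hs, add_comm]
  simp only [rho, if_pos hs, hpow, ← hsqrt, ← hs_pow]
  ring_nf

lemma two_rpow_mul_rpow_mul_half_rpow {x : ℝ} (hx : 0 < x) (q : ℝ) :
    (2 : ℝ) ^ (1 - x / 2) * x ^ (x / 2) * (x / 2) ^ (-(x + q) / 2) / 2 = (2 / x) ^ (q / 2) := by
  have exp_div_two (y : ℝ) : Real.exp y / 2 = Real.exp (y - Real.log 2) := by
    rw [Real.exp_sub, Real.exp_log two_pos]
  simp only [Real.rpow_def_of_pos two_pos, Real.rpow_def_of_pos hx,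
    Real.rpow_def_of_pos (div_pos hx two_pos), Real.rpow_def_of_pos (div_pos two_pos hx),
    Real.log_div hx.ne' two_ne_zero, Real.log_div two_ne_zero hx.ne', ← Real.exp_add, exp_div_two]
  ring_nf

lemma integrableOn_rpow_mul_rho (hm : 0 < m) {q : ℝ} (hq : -(m : ℝ) < q) :
    IntegrableOn (fun s : ℝ => s ^ q * rho m s) (Ioi 0) := by
  have hm' : (0 : ℝ) < m := by exact_mod_cast hm
  refine IntegrableOn.congr_fun ?_ (rpow_mul_rho_eqOn hm q).symm measurableSet_Ioi
  exact (integrableOn_rpow_mul_exp_neg_mul_sq (by positivity) (by linarith)).const_mul _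

lemma integral_rpow_mul_rho (hm : 0 < m) {q : ℝ} (hq : -(m : ℝ) < q) :
    ∫ s in Ioi (0 : ℝ), s ^ q * rho m s =
      (2 / m) ^ (q / 2) * Real.Gamma ((m + q) / 2) / Real.Gamma (m / 2) := by
  have hm' : (0 : ℝ) < m := by exact_mod_cast hm
  have hGamma := integral_rpow_mul_exp_neg_mul_rpow two_pos (by linarith : (-1 : ℝ) < m - 1 + q)
    (by positivity : (0 : ℝ) < m / 2)
  simp only [Real.rpow_two, show (m : ℝ) - 1 + q + 1 = m + q by ring] at hGamma
  rw [setIntegral_congr_fun measurableSet_Ioi (rpow_mul_rho_eqOn hm q), integral_const_mul,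
    hGamma, ← two_rpow_mul_rpow_mul_half_rpow (by positivity : (0 : ℝ) < m) q]
  have := (Real.Gamma_pos_of_pos (by positivity : (0 : ℝ) < m / 2)).ne'
  field_simp

lemma integrableOn_pow_mul_rho (hm : 0 < m) (p : ℕ) :
    IntegrableOn (fun s : ℝ => s ^ p * rho m s) (Ioi 0) := by
  have hp : -(m : ℝ) < p := (neg_neg_of_pos (by exact_mod_cast hm)).trans_le p.cast_nonneg
  simpa using integrableOn_rpow_mul_rho hm hp

lemma integrableOn_rho (hm : 0 < m) : IntegrableOn (rho m) (Ioi 0) := by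
  simpa using integrableOn_pow_mul_rho hm 0

lemma integral_pow_mul_rho (hm : 0 < m) (p : ℕ) :
    ∫ s in Ioi (0 : ℝ), s ^ p * rho m s =
      (2 / m) ^ ((p : ℝ) / 2) * Real.Gamma ((m + p) / 2) / Real.Gamma (m / 2) := by
  have hp : -(m : ℝ) < p := (neg_neg_of_pos (by exact_mod_cast hm)).trans_le p.cast_nonneg
  simpa using integral_rpow_mul_rho hm hp

lemma integral_rho (hm : 0 < m) : ∫ s in Ioi (0 : ℝ), rho m s = 1 := by
  have hΓ := (Real.Gamma_pos_of_pos (by positivity : (0 : ℝ) < m / 2)).ne'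
  simpa [hΓ] using integral_pow_mul_rho hm 0

lemma integral_sq_mul_rho (hm : 0 < m) : ∫ s in Ioi (0 : ℝ), s ^ 2 * rho m s = 1 := by
  have hm' : (0 : ℝ) < m := by exact_mod_cast hm
  have hΓ := (Real.Gamma_pos_of_pos (by positivity : (0 : ℝ) < m / 2)).ne'
  rw [integral_pow_mul_rho hm, show ((m : ℝ) + (2 : ℕ)) / 2 = m / 2 + 1 by push_cast; ring,
    Real.Gamma_add_one (by positivity)]
  norm_num
  field_simp

lemma integral_pow_four_mul_rho (hm : 0 < m) :
    ∫ s in Ioi (0 : ℝ), s ^ 4 * rho m s = (m + 2) / m := by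
  have hm' : (0 : ℝ) < m := by exact_mod_cast hm
  have hΓ := (Real.Gamma_pos_of_pos (by positivity : (0 : ℝ) < m / 2)).ne'
  rw [integral_pow_mul_rho hm, show ((m : ℝ) + (4 : ℕ)) / 2 = m / 2 + 1 + 1 by push_cast; ring,
    Real.Gamma_add_one (by positivity), Real.Gamma_add_one (by positivity)]
  norm_num
  field_simp

lemma sq_sub_one_sq_mul_rho_eq :
    (fun s : ℝ => (s ^ 2 - 1) ^ 2 * rho m s) =
      fun s => s ^ 4 * rho m s - 2 * (s ^ 2 * rho m s) + rho m s := by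
  ext s; ring

lemma integrableOn_sq_sub_one_sq_mul_rho (hm : 0 < m) :
    IntegrableOn (fun s : ℝ => (s ^ 2 - 1) ^ 2 * rho m s) (Ioi 0) := by
  rw [sq_sub_one_sq_mul_rho_eq]
  exact ((integrableOn_pow_mul_rho hm 4).sub ((integrableOn_pow_mul_rho hm 2).const_mul 2)).add
    (integrableOn_rho hm)

lemma integral_sq_sub_one_sq_mul_rho (hm : 0 < m) :
    ∫ s in Ioi (0 : ℝ), (s ^ 2 - 1) ^ 2 * rho m s = 2 / (m : ℝ) := by
  have hm' : (0 : ℝ) < m := by exact_mod_cast hm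
  have h4 := integrableOn_pow_mul_rho hm 4
  have h2 := (integrableOn_pow_mul_rho hm 2).const_mul 2
  have h42 : IntegrableOn (fun s => s ^ 4 * rho m s - 2 * (s ^ 2 * rho m s)) (Ioi 0) :=
    h4.sub h2
  rw [sq_sub_one_sq_mul_rho_eq, integral_add h42 (integrableOn_rho hm), integral_sub h4 h2,
    integral_const_mul, integral_pow_four_mul_rho hm, integral_sq_mul_rho hm, integral_rho hm]
  field_simp
  ring

variable (m) in
noncomputable def rhoMeasure : Measure ℝ :=
  volume.withDensity fun s => ENNReal.ofReal (rho m s)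

lemma ae_pos_rhoMeasure : ∀ᵐ s ∂rhoMeasure m, 0 < s := by
  rw [rhoMeasure, ae_withDensity_iff (measurable_rho m).ennreal_ofReal]
  refine .of_forall fun s hs => lt_of_not_ge fun hs' => hs ?_
  simp [rho_of_nonpos hs']

lemma lintegral_ofReal_rhoMeasure {g : ℝ → ℝ} (hg : Measurable g)
    (hg_nonneg : ∀ s, 0 < s → 0 ≤ g s) (hg_int : IntegrableOn (fun s => g s * rho m s) (Ioi 0)) :
    ∫⁻ s, ENNReal.ofReal (g s) ∂rhoMeasure m = ENNReal.ofReal (∫ s in Ioi 0, g s * rho m s) := by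
  rw [ofReal_integral_eq_lintegral_ofReal hg_int ((ae_restrict_iff' measurableSet_Ioi).2
      (.of_forall fun s hs => mul_nonneg (hg_nonneg s hs) (rho_nonneg m s))),
    ← lintegral_indicator measurableSet_Ioi, rhoMeasure,
    lintegral_withDensity_eq_lintegral_mul _ (measurable_rho m).ennreal_ofReal hg.ennreal_ofReal]
  congr 1 with s
  by_cases hs : 0 < s
  · simp [hs, ENNReal.ofReal_mul' (rho_nonneg m s), mul_comm]
  · simp [hs, rho_of_nonpos (not_lt.1 hs)]

lemma isProbabilityMeasure_rhoMeasure (hm : 0 < m) : IsProbabilityMeasure (rhoMeasure m) := by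
  constructor
  simpa [integral_rho hm] using lintegral_ofReal_rhoMeasure (m := m) (g := fun _ => 1)
    measurable_const (fun _ _ => zero_le_one) (by simpa using integrableOn_rho hm)

lemma abs_sub_one_le_abs_sq_sub_one {s : ℝ} (hs : 0 ≤ s) : |s - 1| ≤ |s ^ 2 - 1| := by
  rw [show s ^ 2 - 1 = (s - 1) * (s + 1) by ring, abs_mul]
  exact le_mul_of_one_le_right (abs_nonneg _) (by rw [abs_of_pos (by linarith)]; linarith)

lemma abs_le_sq_div_add_div_two {δ : ℝ} (hδ : 0 < δ) (x : ℝ) : |x| ≤ (x ^ 2 / δ + δ) / 2 := by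
  have h : (x ^ 2 / δ + δ) / 2 - |x| = (|x| - δ) ^ 2 / (2 * δ) := by
    rw [← sq_abs x]; field_simp; ring
  linarith [div_nonneg (sq_nonneg (|x| - δ)) (by positivity : (0 : ℝ) ≤ 2 * δ)]

lemma lintegral_abs_sub_one_rhoMeasure_le (hm : 0 < m) :
    ∫⁻ s, ENNReal.ofReal |s - 1| ∂rhoMeasure m ≤ ENNReal.ofReal (Real.sqrt (2 / m)) := by
  set δ := Real.sqrt (2 / m)
  have hδ : 0 < δ := Real.sqrt_pos.2 (by positivity)
  have hδ_sq : δ ^ 2 = 2 / m := Real.sq_sqrt (by positivity)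
  -- AM-GM with `δ² = Var(S²)` stands in for Cauchy–Schwarz `E|S² - 1| ≤ √Var(S²)`
  set g : ℝ → ℝ := fun s => ((s ^ 2 - 1) ^ 2 / δ + δ) / 2
  have hg_eq : (fun s => g s * rho m s) =
      fun s => (2 * δ)⁻¹ * ((s ^ 2 - 1) ^ 2 * rho m s) + δ / 2 * rho m s := by
    ext s; simp only [g]; field_simp
  have hint := (integrableOn_sq_sub_one_sq_mul_rho hm).const_mul (2 * δ)⁻¹
  have h0 := (integrableOn_rho hm).const_mul (δ / 2)
  calc ∫⁻ s, ENNReal.ofReal |s - 1| ∂rhoMeasure m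
      ≤ ∫⁻ s, ENNReal.ofReal (g s) ∂rhoMeasure m :=
        lintegral_mono_ae <| ae_pos_rhoMeasure.mono fun s hs => ENNReal.ofReal_le_ofReal <|
          (abs_sub_one_le_abs_sq_sub_one hs.le).trans (abs_le_sq_div_add_div_two hδ _)
    _ = ENNReal.ofReal (∫ s in Ioi 0, g s * rho m s) :=
        lintegral_ofReal_rhoMeasure (by fun_prop) (fun s _ => by positivity)
          (by rw [hg_eq]; exact hint.add h0)
    _ = ENNReal.ofReal δ := by
        rw [hg_eq, integral_add hint h0, integral_const_mul, integral_const_mul,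
          integral_sq_sub_one_sq_mul_rho hm, integral_rho hm, ← hδ_sq]
        congr 1
        field_simp
        ring

end Rho

lemma abs_toReal_map_sub_le {α β : Type*} [MeasurableSpace α] [MeasurableSpace β]
    {μ : Measure α} [IsFiniteMeasure μ] {f g : α → β} (hf : Measurable f) (hg : Measurable g)
    {E : Set α} (hfg : ∀ x ∉ E, f x = g x) {A : Set β} (hA : MeasurableSet A) :
    |(μ.map f A).toReal - (μ.map g A).toReal| ≤ (μ E).toReal := by
  have hle {f g : α → β} (hfg : ∀ x ∉ E, f x = g x) :
      μ.real (f ⁻¹' A) ≤ μ.real (g ⁻¹' A) + μ.real E := by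
    refine (measureReal_mono fun x hx => ?_).trans (measureReal_union_le _ _)
    by_cases hxE : x ∈ E
    · exact Or.inr hxE
    · exact Or.inl (by rwa [mem_preimage, ← hfg x hxE])
  rw [Measure.map_apply hf hA, Measure.map_apply hg hA]
  change |μ.real (f ⁻¹' A) - μ.real (g ⁻¹' A)| ≤ μ.real E
  exact abs_sub_le_iff.2 ⟨by linarith [hle hfg], by linarith [hle fun x hx => (hfg x hx).symm]⟩

lemma gaussianReal_le_mul_volume (θ : ℝ) {v : ℝ≥0} (hv : v ≠ 0) (I : Set ℝ) :
    gaussianReal θ v I ≤ ENNReal.ofReal (Real.sqrt (2 * Real.pi * v))⁻¹ * volume I := by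
  rw [gaussianReal_apply θ hv I, ← setLIntegral_const]
  refine lintegral_mono fun x => ENNReal.ofReal_le_ofReal ?_
  rw [gaussianPDFReal]
  refine mul_le_of_le_one_right (by positivity) (Real.exp_le_one_iff.2 ?_)
  rw [neg_div]
  exact neg_nonpos.2 (by positivity)

lemma gaussianReal_abs_mem_Ioc_le (θ : ℝ) {v : ℝ≥0} (hv : v ≠ 0) {a c : ℝ} (hac : a ≤ c) :
    gaussianReal θ v {z | |z| ∈ Ioc a c} ≤
      ENNReal.ofReal ((Real.sqrt (2 * Real.pi * v))⁻¹ * (2 * (c - a))) := by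
  have hsub : {z : ℝ | |z| ∈ Ioc a c} ⊆ Ioc a c ∪ Ico (-c) (-a) := by
    rintro z ⟨h1, h2⟩
    rcases le_or_gt 0 z with hz | hz
    · left; rw [abs_of_nonneg hz] at h1 h2; exact ⟨h1, h2⟩
    · right; rw [abs_of_neg hz] at h1 h2; exact ⟨by linarith, by linarith⟩
  calc gaussianReal θ v {z | |z| ∈ Ioc a c}
      ≤ gaussianReal θ v (Ioc a c) + gaussianReal θ v (Ico (-c) (-a)) :=
        (measure_mono hsub).trans (measure_union_le _ _)
    _ ≤ ENNReal.ofReal (Real.sqrt (2 * Real.pi * v))⁻¹ * volume (Ioc a c) +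
          ENNReal.ofReal (Real.sqrt (2 * Real.pi * v))⁻¹ * volume (Ico (-c) (-a)) :=
        add_le_add (gaussianReal_le_mul_volume θ hv _) (gaussianReal_le_mul_volume θ hv _)
    _ = ENNReal.ofReal ((Real.sqrt (2 * Real.pi * v))⁻¹ * (2 * (c - a))) := by
        rw [Real.volume_Ioc, Real.volume_Ico, neg_sub_neg, ← mul_add,
          ← ENNReal.ofReal_add (by linarith) (by linarith), ← ENNReal.ofReal_mul (by positivity),
          ← two_mul]

lemma ite_lt_abs_eq_of_abs_notMem_Ioc {t t' z : ℝ} (h : |z| ∉ Ioc (min t t') (max t t')) :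
    (if t < |z| then z else 0) = (if t' < |z| then z else 0) := by
  split_ifs with ht ht' ht''
  · rfl
  · exact absurd ⟨min_lt_iff.2 (Or.inl ht), le_max_iff.2 (Or.inr (not_lt.1 ht'))⟩ h
  · exact absurd ⟨min_lt_iff.2 (Or.inr ht''), le_max_iff.2 (Or.inl (not_lt.1 ht))⟩ h
  · rfl

lemma prod_abs_mem_Ioc_min_max_le (θ : ℝ) {v : ℝ≥0} (hv : v ≠ 0) (b : ℝ) (ν : Measure ℝ)
    [SFinite ν] :
    (gaussianReal θ v).prod ν {p | |p.1| ∈ Ioc (min (b * p.2) b) (max (b * p.2) b)} ≤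
      ENNReal.ofReal ((Real.sqrt (2 * Real.pi * v))⁻¹ * (2 * |b|)) *
        ∫⁻ s, ENNReal.ofReal |s - 1| ∂ν := by
  have hmeas : MeasurableSet {p : ℝ × ℝ | |p.1| ∈ Ioc (min (b * p.2) b) (max (b * p.2) b)} :=
    (measurableSet_lt (f := fun p : ℝ × ℝ => min (b * p.2) b) (by fun_prop) (by fun_prop)).inter
      (measurableSet_le (g := fun p : ℝ × ℝ => max (b * p.2) b) (by fun_prop) (by fun_prop))
  rw [Measure.prod_apply_symm hmeas, ← lintegral_const_mul _ (by fun_prop)]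
  refine lintegral_mono fun s => ?_
  change gaussianReal θ v {z | |z| ∈ Ioc (min (b * s) b) (max (b * s) b)} ≤ _
  refine (gaussianReal_abs_mem_Ioc_le θ hv min_le_max).trans_eq ?_
  rw [← ENNReal.ofReal_mul (by positivity), max_sub_min_eq_abs',
    show b * s - b = b * (s - 1) by ring, abs_mul]
  ring_nf

lemma jointMeas_eq (n m : ℕ) (ξ θ σ : ℝ) :
    jointMeas n m ξ θ σ =
      (gaussianReal θ (Real.toNNReal (σ ^ 2 * ξ ^ 2 / n))).prod (rhoMeasure m) :=
  rfl

lemma inv_sqrt_two_pi_var_mul_eq {σ ξ n : ℝ} (hσ : 0 < σ) (hξ : 0 < ξ) (hn : 0 < n) (η m : ℝ) :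
    (Real.sqrt (2 * Real.pi * (σ ^ 2 * ξ ^ 2 / n)))⁻¹ * (2 * |σ * ξ * η|) * Real.sqrt (2 / m) =
      2 / Real.sqrt Real.pi * |Real.sqrt n * η / Real.sqrt m| := by
  have hsqrt : Real.sqrt (2 * Real.pi * (σ ^ 2 * ξ ^ 2 / n)) =
      Real.sqrt 2 * Real.sqrt Real.pi * (σ * ξ) / Real.sqrt n := by
    rw [show 2 * Real.pi * (σ ^ 2 * ξ ^ 2 / n) = 2 * Real.pi * (σ * ξ) ^ 2 / n by ring,
      Real.sqrt_div' _ hn.le, Real.sqrt_mul' _ (sq_nonneg _), Real.sqrt_sq (by positivity),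
      Real.sqrt_mul zero_le_two]
  have hπ : 0 < Real.sqrt Real.pi := Real.sqrt_pos.2 Real.pi_pos
  rw [hsqrt, Real.sqrt_div zero_le_two, abs_mul, abs_of_pos (mul_pos hσ hξ), abs_div, abs_mul,
    abs_of_pos (Real.sqrt_pos.2 hn), abs_of_nonneg (Real.sqrt_nonneg m)]
  field_simp

theorem abs_hardThreshold_law_sub_le {n m : ℕ} (hn : 0 < n) (hm : 0 < m) {ξ σ : ℝ}
    (hξ : 0 < ξ) (hσ : 0 < σ) (η α θ : ℝ) {A : Set ℝ} (hA : MeasurableSet A) :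
    |((Measure.map (fun z : ℝ => σ⁻¹ * α * ((if σ * ξ * η < |z| then z else 0) - θ))
          (gaussianReal θ (Real.toNNReal (σ ^ 2 * ξ ^ 2 / n)))) A).toReal -
      ((Measure.map (fun p : ℝ × ℝ => σ⁻¹ * α * (hardF σ ξ η p - θ))
          (jointMeas n m ξ θ σ)) A).toReal| ≤
      2 / Real.sqrt Real.pi * |Real.sqrt n * η / Real.sqrt m| := by
  have hn' : (0 : ℝ) < n := by exact_mod_cast hn
  set v := Real.toNNReal (σ ^ 2 * ξ ^ 2 / n)
  have hv : (v : ℝ) = σ ^ 2 * ξ ^ 2 / n := Real.coe_toNNReal _ (by positivity)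
  have hv0 : v ≠ 0 := (Real.toNNReal_pos.2 (by positivity)).ne'
  have := isProbabilityMeasure_rhoMeasure hm
  set b := σ * ξ * η
  set T : ℝ → ℝ := fun z => σ⁻¹ * α * ((if b < |z| then z else 0) - θ)
  have hT : Measurable T :=
    ((Measurable.ite (measurableSet_lt measurable_const (by fun_prop)) measurable_id
      measurable_const).sub_const _).const_mul _
  have hF : Measurable fun p : ℝ × ℝ => σ⁻¹ * α * (hardF σ ξ η p - θ) :=
    ((Measurable.ite (measurableSet_lt (by fun_prop) (by fun_prop)) measurable_fst
      measurable_const).sub_const _).const_mul _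
  have hmarg : (gaussianReal θ v).map T =
      ((gaussianReal θ v).prod (rhoMeasure m)).map (T ∘ Prod.fst) := by
    rw [← Measure.map_map hT measurable_fst, Measure.map_fst_prod, measure_univ, one_smul]
  rw [hmarg, jointMeas_eq]
  refine (abs_toReal_map_sub_le (hT.comp measurable_fst) hF
    (E := {p | |p.1| ∈ Ioc (min (b * p.2) b) (max (b * p.2) b)}) (fun p hp => ?_) hA).trans ?_
  · simp only [Function.comp, T, hardF, show σ * p.2 * ξ * η = b * p.2 by ring,
      ite_lt_abs_eq_of_abs_notMem_Ioc hp]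
  · have hE := (prod_abs_mem_Ioc_min_max_le θ hv0 b (rhoMeasure m)).trans
      (mul_le_mul_right (lintegral_abs_sub_one_rhoMeasure_le hm) _)
    rw [← ENNReal.ofReal_mul (by positivity), hv, inv_sqrt_two_pi_var_mul_eq hσ hξ hn'] at hE
    exact ENNReal.toReal_le_of_le_ofReal (by positivity) hE

theorem stmt_15_general (ξ η α : ℕ → ℝ)
    (hξ : ∀ n, 0 < ξ n)
    (k : ℕ → ℕ) (hk : ∀ n, 2 ≤ n → 1 ≤ k n ∧ k n < n)
    (hr : Tendsto (fun n : ℕ => Real.sqrt n * η n / Real.sqrt ((n - k n : ℕ) : ℝ))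
      atTop (nhds 0)) :
    ∀ ε > (0 : ℝ), ∀ᶠ n in atTop, ∀ θ σ : ℝ, 0 < σ → ∀ A : Set ℝ, MeasurableSet A →
      |((Measure.map
            (fun z : ℝ => σ⁻¹ * α n * ((if σ * ξ n * η n < |z| then z else 0) - θ))
            (gaussianReal θ (Real.toNNReal (σ ^ 2 * ξ n ^ 2 / n)))) A).toReal -
        ((Measure.map (fun p : ℝ × ℝ => σ⁻¹ * α n * (hardF σ (ξ n) (η n) p - θ))
            (jointMeas n (n - k n) (ξ n) θ σ)) A).toReal| < ε := by
  intro ε hε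
  have hπ : 0 < Real.sqrt Real.pi := Real.sqrt_pos.2 Real.pi_pos
  have hsmall : ∀ᶠ n : ℕ in atTop,
      |Real.sqrt n * η n / Real.sqrt ((n - k n : ℕ) : ℝ)| < Real.sqrt Real.pi * ε / 2 :=
    hr.abs.eventually_lt_const (by rw [abs_zero]; positivity)
  filter_upwards [hsmall, eventually_ge_atTop 2] with n hn_small hn θ σ hσ A hA
  have hm : 0 < n - k n := Nat.sub_pos_of_lt (hk n hn).2
  refine (abs_hardThreshold_law_sub_le (by omega) hm (hξ n) hσ _ _ _ hA).trans_lt ?_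
  rw [div_mul_eq_mul_div, div_lt_iff₀ hπ]
  linarith

/-- uniform closeness, in total variation distance, of the laws of the
scaled and centered infeasible and feasible hard-thresholding estimators when
`n^{1/2} η_n (n - k_n)^{-1/2} → 0`. -/
theorem stmt_15 (ξ η α : ℕ → ℝ)
    (hξ : ∀ n, 0 < ξ n) (hη : ∀ n, 0 < η n) (hα : ∀ n, 0 < α n)
    (k : ℕ → ℕ) (hk : ∀ n, 2 ≤ n → 1 ≤ k n ∧ k n < n)
    (hr : Tendsto (fun n : ℕ => Real.sqrt n * η n / Real.sqrt ((n - k n : ℕ) : ℝ))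
      atTop (nhds 0)) :
    ∀ ε > (0 : ℝ), ∀ᶠ n in atTop, ∀ θ σ : ℝ, 0 < σ → ∀ A : Set ℝ, MeasurableSet A →
      |((Measure.map
            (fun z : ℝ => σ⁻¹ * α n * ((if σ * ξ n * η n < |z| then z else 0) - θ))
            (gaussianReal θ (Real.toNNReal (σ ^ 2 * ξ n ^ 2 / n)))) A).toReal -
        ((Measure.map (fun p : ℝ × ℝ => σ⁻¹ * α n * (hardF σ (ξ n) (η n) p - θ))
            (jointMeas n (n - k n) (ξ n) θ σ)) A).toReal| < ε :=
  stmt_15_general ξ η α hξ k hk hr
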